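/- Any two sequences of reductions of a scoring play game G by removing dominated options and bypassing reversible options, each terminating in a game with no dominated or reversible options, yield equivalent results: if G → G₁ → … → G_n and G → G₁' → … → G_m' are two such reduction sequences with G_n and G_m' in canonical form, then G_n ≡ G_m'. -/

import Mathlib

inductive SGame : Type where
  | mk (left right : List SGame) (score : ℝ)

namespace SGame

def leftOpts : SGame → List SGame | mk L _ _ => L
def rightOpts : SGame → List SGame | mk _ R _ => R
def score : SGame → ℝ | mk _ _ s => s

mutual
  /-- Optimal final score when Left moves first. -/
  def leftScore : SGame → ℝ
    | mk [] _ s => s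
    | mk (g :: L) _ _ => maxRight g L
  termination_by G => sizeOf G
  decreasing_by all_goals (simp; try omega)
  def maxRight : SGame → List SGame → ℝ
    | g, [] => rightScore g
    | g, h :: t => max (rightScore g) (maxRight h t)
  termination_by g l => 1 + sizeOf g + sizeOf l
  decreasing_by all_goals (simp; try omega)
  /-- Optimal final score when Right moves first. -/
  def rightScore : SGame → ℝ
    | mk _ [] s => s
    | mk _ (g :: R) _ => minLeft g R
  termination_by G => sizeOf G
  decreasing_by all_goals (simp; try omega)
  def minLeft : SGame → List SGame → ℝ
    | g, [] => leftScore g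
    | g, h :: t => min (leftScore g) (minLeft h t)
  termination_by g l => 1 + sizeOf g + sizeOf l
  decreasing_by all_goals (simp; try omega)
end

/-- Long-rule disjunctive sum. -/
def sum : SGame → SGame → SGame
  | mk L1 R1 s1, mk L2 R2 s2 =>
    mk ((L1.attach.map fun g => sum g.1 (mk L2 R2 s2)) ++
        (L2.attach.map fun h => sum (mk L1 R1 s1) h.1))
       ((R1.attach.map fun g => sum g.1 (mk L2 R2 s2)) ++
        (R2.attach.map fun h => sum (mk L1 R1 s1) h.1))
       (s1 + s2)
termination_by G H => sizeOf G + sizeOf H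
decreasing_by
  all_goals simp
  · have := List.sizeOf_lt_of_mem g.2; omega
  · have := List.sizeOf_lt_of_mem h.2; omega
  · have := List.sizeOf_lt_of_mem g.2; omega
  · have := List.sizeOf_lt_of_mem h.2; omega

end SGame

namespace SGame

/-- The game `{.|0|.}`. -/
def zero : SGame := mk [] [] 0

/-- Negation: `-G = {-G^R | -G^S | -G^L}`. -/
def neg : SGame → SGame
  | mk L R s =>
    mk (R.attach.map fun g => neg g.1) (L.attach.map fun g => neg g.1) (-s)
termination_by G => sizeOf G
decreasing_by
  all_goals (have := List.sizeOf_lt_of_mem g.2; simp; omega)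

/-- Identity of game trees (options regarded as sets). -/
def Ident : SGame → SGame → Prop
  | mk L1 R1 s1, mk L2 R2 s2 =>
    s1 = s2 ∧
    (∀ g ∈ L1.attach, ∃ h ∈ L2.attach, Ident g.1 h.1) ∧
    (∀ h ∈ L2.attach, ∃ g ∈ L1.attach, Ident g.1 h.1) ∧
    (∀ g ∈ R1.attach, ∃ h ∈ R2.attach, Ident g.1 h.1) ∧
    (∀ h ∈ R2.attach, ∃ g ∈ R1.attach, Ident g.1 h.1)
termination_by G H => sizeOf G + sizeOf H
decreasing_by
  all_goals
    (have := List.sizeOf_lt_of_mem g.2; have := List.sizeOf_lt_of_mem h.2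
     simp; omega)

inductive Outcome : Type where
  | L | R | N | P | T
deriving DecidableEq

/-- The outcome class of a game, determined by the signs of its final scores. -/
noncomputable def outcome (G : SGame) : Outcome :=
  if 0 < G.leftScore then
    (if 0 < G.rightScore then .L else if G.rightScore = 0 then .L else .N)
  else if G.leftScore = 0 then
    (if 0 < G.rightScore then .L else if G.rightScore = 0 then .T else .R)
  else
    (if 0 < G.rightScore then .P else .R)

/-- `G ≥ H`. -/
def Ge (G H : SGame) : Prop :=
  ∀ X : SGame,
    (0 ≤ (H.sum X).leftScore → 0 ≤ (G.sum X).leftScore) ∧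
    (0 ≤ (H.sum X).rightScore → 0 ≤ (G.sum X).rightScore) ∧
    (0 < (H.sum X).leftScore → 0 < (G.sum X).leftScore) ∧
    (0 < (H.sum X).rightScore → 0 < (G.sum X).rightScore)

/-- `G ≤ H`. -/
def Le (G H : SGame) : Prop :=
  ∀ X : SGame,
    ((H.sum X).leftScore ≤ 0 → (G.sum X).leftScore ≤ 0) ∧
    ((H.sum X).rightScore ≤ 0 → (G.sum X).rightScore ≤ 0) ∧
    ((H.sum X).leftScore < 0 → (G.sum X).leftScore < 0) ∧
    ((H.sum X).rightScore < 0 → (G.sum X).rightScore < 0)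

/-- Game equality: same outcome in every disjunctive-sum context. -/
def gameEq (G H : SGame) : Prop :=
  ∀ X : SGame, (G.sum X).outcome = (H.sum X).outcome

end SGame

namespace SGame

/-- Every score in the game tree of `G` satisfies `p`. -/
def AllScores (p : ℝ → Prop) : SGame → Prop
  | mk L R s =>
    p s ∧ (∀ g ∈ L.attach, AllScores p g.1) ∧ (∀ g ∈ R.attach, AllScores p g.1)
termination_by G => sizeOf G
decreasing_by all_goals (have := List.sizeOf_lt_of_mem g.2; simp; omega)

/-- `G ≡ H`: identical underlying game trees, with equal scores at all
termination vertices (vertices at which at least one player has no option,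
i.e. where the play of some disjunctive sum can end). -/
def Equiv : SGame → SGame → Prop
  | mk L1 R1 s1, mk L2 R2 s2 =>
    ((L1 = [] ∨ R1 = []) → s1 = s2) ∧
    (∀ g ∈ L1.attach, ∃ h ∈ L2.attach, Equiv g.1 h.1) ∧
    (∀ h ∈ L2.attach, ∃ g ∈ L1.attach, Equiv g.1 h.1) ∧
    (∀ g ∈ R1.attach, ∃ h ∈ R2.attach, Equiv g.1 h.1) ∧
    (∀ h ∈ R2.attach, ∃ g ∈ R1.attach, Equiv g.1 h.1)
termination_by G H => sizeOf G + sizeOf H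
decreasing_by
  all_goals
    (have := List.sizeOf_lt_of_mem g.2; have := List.sizeOf_lt_of_mem h.2
     simp; omega)

/-- `G` is in canonical form: hereditarily, no dominated and no reversible options. -/
def Canonical : SGame → Prop
  | mk L R s =>
    (∀ A ∈ L, ∀ B ∈ L, A ≠ B → ¬ Ge A B) ∧
    (∀ D ∈ R, ∀ E ∈ R, D ≠ E → ¬ Le D E) ∧
    (∀ A ∈ L, ∀ Ar ∈ A.rightOpts, ¬ Le Ar (mk L R s)) ∧
    (∀ D ∈ R, ∀ Dl ∈ D.leftOpts, ¬ Ge Dl (mk L R s)) ∧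
    (∀ g ∈ L.attach, Canonical g.1) ∧ (∀ g ∈ R.attach, Canonical g.1)
termination_by G => sizeOf G
decreasing_by all_goals (have := List.sizeOf_lt_of_mem g.2; simp; omega)

/-- One reduction step: removing a dominated option or bypassing a reversible
option, at the root or in some subposition. -/
inductive Step : SGame → SGame → Prop where
  | domL {L1 L2 : List SGame} {R : List SGame} {s : ℝ} {B : SGame} (A : SGame)
      (hA : A ∈ L1 ++ L2) (h : Ge A B) :
      Step (mk (L1 ++ B :: L2) R s) (mk (L1 ++ L2) R s)
  | domR {R1 R2 : List SGame} {L : List SGame} {s : ℝ} {E : SGame} (D : SGame)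
      (hD : D ∈ R1 ++ R2) (h : Le D E) :
      Step (mk L (R1 ++ E :: R2) s) (mk L (R1 ++ R2) s)
  | revL {L1 L2 : List SGame} {R : List SGame} {s : ℝ} {A Ar : SGame}
      (hAr : Ar ∈ A.rightOpts) (h : Le Ar (mk (L1 ++ A :: L2) R s)) :
      Step (mk (L1 ++ A :: L2) R s) (mk (L1 ++ Ar.leftOpts ++ L2) R s)
  | revR {R1 R2 : List SGame} {L : List SGame} {s : ℝ} {D Dl : SGame}
      (hDl : Dl ∈ D.leftOpts) (h : Ge Dl (mk L (R1 ++ D :: R2) s)) :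
      Step (mk L (R1 ++ D :: R2) s) (mk L (R1 ++ Dl.rightOpts ++ R2) s)
  | congL {g g' : SGame} {L1 L2 R : List SGame} {s : ℝ} (h : Step g g') :
      Step (mk (L1 ++ g :: L2) R s) (mk (L1 ++ g' :: L2) R s)
  | congR {g g' : SGame} {L R1 R2 : List SGame} {s : ℝ} (h : Step g g') :
      Step (mk L (R1 ++ g :: R2) s) (mk L (R1 ++ g' :: R2) s)

end SGame

/-!
Game equality is handled through a preorder: `G ≤ H` when, in every context `X`, the optimal
scores of `H + X` are at least those of `G + X` with either player starting. Shifting the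
context by a constant game shows that this is the sign-based order `Le`/`Ge`.

Every reduction step is an equality, by a criterion for `G ≤ H` that compares options in a
fixed context, with an induction on the context. Conversely, if `G ≤ H` and a Left option
`A` of `G` is not reversible through `H`, then `A ≤ A'` for some Left option `A'` of `H`:
otherwise, combining one separating context for each failure (and a bonus move for Left)
gives a context `X` in which Left wins `G + X` by moving to `A + X` but loses `H + X`.
For equal canonical games this matches every option with an equal option on the other
side (going there and back lands on a dominating option, so on the option itself, as none
is dominated), and recursion gives `≡`.
-/

namespace SGame

@[elab_as_elim]
theorem induction_on_options {motive : SGame → Prop} (X : SGame)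
    (h : ∀ X, (∀ Y ∈ X.leftOpts, motive Y) → (∀ Y ∈ X.rightOpts, motive Y) →
      motive X) :
    motive X :=
  match X with
  | mk L R s =>
    h _ (fun Y (hY : Y ∈ L) => have := List.sizeOf_lt_of_mem hY; induction_on_options Y h)
      fun Y (hY : Y ∈ R) => have := List.sizeOf_lt_of_mem hY; induction_on_options Y h
termination_by sizeOf X
decreasing_by all_goals (simp; omega)

@[simp] theorem leftOpts_mk (L R : List SGame) (s : ℝ) : (mk L R s).leftOpts = L := rfl
@[simp] theorem rightOpts_mk (L R : List SGame) (s : ℝ) : (mk L R s).rightOpts = R := rfl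
@[simp] theorem score_mk (L R : List SGame) (s : ℝ) : (mk L R s).score = s := rfl

/-! ### Optimal scores -/

theorem rightScore_le_maxRight {A g : SGame} {l : List SGame} (h : A ∈ g :: l) :
    A.rightScore ≤ maxRight g l := by
  induction l generalizing g with
  | nil => rw [List.mem_singleton.1 h, maxRight]
  | cons g' l ih =>
    rw [maxRight]
    rcases List.mem_cons.1 h with rfl | h
    · exact le_max_left _ _
    · exact (ih h).trans (le_max_right _ _)

theorem exists_maxRight_eq (g : SGame) (l : List SGame) :
    ∃ A ∈ g :: l, maxRight g l = A.rightScore := by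
  induction l generalizing g with
  | nil => exact ⟨g, List.mem_singleton_self g, by rw [maxRight]⟩
  | cons g' l ih =>
    obtain ⟨A, hA, hmax⟩ := ih g'
    rw [maxRight, hmax]
    rcases le_total g.rightScore A.rightScore with h | h
    · exact ⟨A, List.mem_cons_of_mem g hA, max_eq_right h⟩
    · exact ⟨g, List.mem_cons_self, max_eq_left h⟩

theorem minLeft_le_leftScore {D g : SGame} {l : List SGame} (h : D ∈ g :: l) :
    minLeft g l ≤ D.leftScore := by
  induction l generalizing g with
  | nil => rw [List.mem_singleton.1 h, minLeft]
  | cons g' l ih =>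
    rw [minLeft]
    rcases List.mem_cons.1 h with rfl | h
    · exact min_le_left _ _
    · exact (min_le_right _ _).trans (ih h)

theorem exists_minLeft_eq (g : SGame) (l : List SGame) :
    ∃ D ∈ g :: l, minLeft g l = D.leftScore := by
  induction l generalizing g with
  | nil => exact ⟨g, List.mem_singleton_self g, by rw [minLeft]⟩
  | cons g' l ih =>
    obtain ⟨D, hD, hmin⟩ := ih g'
    rw [minLeft, hmin]
    rcases le_total g.leftScore D.leftScore with h | h
    · exact ⟨g, List.mem_cons_self, min_eq_left h⟩
    · exact ⟨D, List.mem_cons_of_mem g hD, min_eq_right h⟩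

theorem leftScore_of_leftOpts_eq_nil {G : SGame} (h : G.leftOpts = []) :
    G.leftScore = G.score := by
  obtain ⟨L, R, s⟩ := G
  subst h
  rw [leftScore, score]

theorem rightScore_of_rightOpts_eq_nil {G : SGame} (h : G.rightOpts = []) :
    G.rightScore = G.score := by
  obtain ⟨L, R, s⟩ := G
  subst h
  rw [rightScore, score]

theorem le_leftScore_of_mem_leftOpts {G A : SGame} (h : A ∈ G.leftOpts) :
    A.rightScore ≤ G.leftScore := by
  obtain ⟨_ | ⟨g, L⟩, R, s⟩ := G
  · simp at h
  · rw [leftScore]; exact rightScore_le_maxRight h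

theorem rightScore_le_of_mem_rightOpts {G D : SGame} (h : D ∈ G.rightOpts) :
    G.rightScore ≤ D.leftScore := by
  obtain ⟨L, _ | ⟨g, R⟩, s⟩ := G
  · simp at h
  · rw [rightScore]; exact minLeft_le_leftScore h

theorem exists_leftScore_eq {G : SGame} (h : G.leftOpts ≠ []) :
    ∃ A ∈ G.leftOpts, G.leftScore = A.rightScore := by
  obtain ⟨_ | ⟨g, L⟩, R, s⟩ := G
  · exact absurd rfl h
  · rw [leftScore]; exact exists_maxRight_eq g L

theorem exists_rightScore_eq {G : SGame} (h : G.rightOpts ≠ []) :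
    ∃ D ∈ G.rightOpts, G.rightScore = D.leftScore := by
  obtain ⟨L, _ | ⟨g, R⟩, s⟩ := G
  · exact absurd rfl h
  · rw [rightScore]; exact exists_minLeft_eq g R

theorem leftScore_mem_iff {G : SGame} {S : Set ℝ} (hS : IsLowerSet S) :
    G.leftScore ∈ S ↔
      (G.leftOpts = [] → G.score ∈ S) ∧ ∀ A ∈ G.leftOpts, A.rightScore ∈ S := by
  refine ⟨fun h => ⟨fun hG => leftScore_of_leftOpts_eq_nil hG ▸ h,
    fun A hA => hS (le_leftScore_of_mem_leftOpts hA) h⟩, fun ⟨hnil, hopt⟩ => ?_⟩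
  by_cases hG : G.leftOpts = []
  · exact (leftScore_of_leftOpts_eq_nil hG).symm ▸ hnil hG
  · obtain ⟨A, hA, hGA⟩ := exists_leftScore_eq hG
    exact hGA ▸ hopt A hA

theorem rightScore_mem_iff {G : SGame} {S : Set ℝ} (hS : IsUpperSet S) :
    G.rightScore ∈ S ↔
      (G.rightOpts = [] → G.score ∈ S) ∧ ∀ D ∈ G.rightOpts, D.leftScore ∈ S := by
  refine ⟨fun h => ⟨fun hG => rightScore_of_rightOpts_eq_nil hG ▸ h,
    fun D hD => hS (rightScore_le_of_mem_rightOpts hD) h⟩, fun ⟨hnil, hopt⟩ => ?_⟩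
  by_cases hG : G.rightOpts = []
  · exact (rightScore_of_rightOpts_eq_nil hG).symm ▸ hnil hG
  · obtain ⟨D, hD, hGD⟩ := exists_rightScore_eq hG
    exact hGD ▸ hopt D hD

theorem leftScore_le_iff {G : SGame} {x : ℝ} :
    G.leftScore ≤ x ↔
      (G.leftOpts = [] → G.score ≤ x) ∧ ∀ A ∈ G.leftOpts, A.rightScore ≤ x :=
  leftScore_mem_iff (isLowerSet_Iic x)

theorem leftScore_lt_iff {G : SGame} {x : ℝ} :
    G.leftScore < x ↔
      (G.leftOpts = [] → G.score < x) ∧ ∀ A ∈ G.leftOpts, A.rightScore < x :=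
  leftScore_mem_iff (isLowerSet_Iio x)

theorem le_rightScore_iff {G : SGame} {x : ℝ} :
    x ≤ G.rightScore ↔
      (G.rightOpts = [] → x ≤ G.score) ∧ ∀ D ∈ G.rightOpts, x ≤ D.leftScore :=
  rightScore_mem_iff (isUpperSet_Ici x)

theorem lt_rightScore_iff {G : SGame} {x : ℝ} :
    x < G.rightScore ↔
      (G.rightOpts = [] → x < G.score) ∧ ∀ D ∈ G.rightOpts, x < D.leftScore :=
  rightScore_mem_iff (isUpperSet_Ioi x)

/-! ### Disjunctive sums -/

theorem leftOpts_sum (G X : SGame) :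
    (G.sum X).leftOpts = G.leftOpts.map (·.sum X) ++ X.leftOpts.map G.sum := by
  obtain ⟨L, R, s⟩ := G; obtain ⟨L', R', s'⟩ := X
  rw [sum]; simp

theorem rightOpts_sum (G X : SGame) :
    (G.sum X).rightOpts = G.rightOpts.map (·.sum X) ++ X.rightOpts.map G.sum := by
  obtain ⟨L, R, s⟩ := G; obtain ⟨L', R', s'⟩ := X
  rw [sum]; simp

theorem score_sum (G X : SGame) : (G.sum X).score = G.score + X.score := by
  obtain ⟨L, R, s⟩ := G; obtain ⟨L', R', s'⟩ := X
  rw [sum]; rfl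

theorem leftOpts_sum_eq_nil {G X : SGame} :
    (G.sum X).leftOpts = [] ↔ G.leftOpts = [] ∧ X.leftOpts = [] := by
  simp [leftOpts_sum]

theorem rightOpts_sum_eq_nil {G X : SGame} :
    (G.sum X).rightOpts = [] ↔ G.rightOpts = [] ∧ X.rightOpts = [] := by
  simp [rightOpts_sum]

theorem mem_leftOpts_sum {G X Q : SGame} :
    Q ∈ (G.sum X).leftOpts ↔
      (∃ A ∈ G.leftOpts, A.sum X = Q) ∨ ∃ Y ∈ X.leftOpts, G.sum Y = Q := by
  simp [leftOpts_sum]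

theorem mem_rightOpts_sum {G X Q : SGame} :
    Q ∈ (G.sum X).rightOpts ↔
      (∃ D ∈ G.rightOpts, D.sum X = Q) ∨ ∃ Y ∈ X.rightOpts, G.sum Y = Q := by
  simp [rightOpts_sum]

theorem sum_mem_leftOpts_sum_left {G A : SGame} (X : SGame) (h : A ∈ G.leftOpts) :
    A.sum X ∈ (G.sum X).leftOpts :=
  mem_leftOpts_sum.2 (.inl ⟨A, h, rfl⟩)

theorem sum_mem_leftOpts_sum_right (G : SGame) {X Y : SGame} (h : Y ∈ X.leftOpts) :
    G.sum Y ∈ (G.sum X).leftOpts :=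
  mem_leftOpts_sum.2 (.inr ⟨Y, h, rfl⟩)

theorem sum_mem_rightOpts_sum_left {G D : SGame} (X : SGame) (h : D ∈ G.rightOpts) :
    D.sum X ∈ (G.sum X).rightOpts :=
  mem_rightOpts_sum.2 (.inl ⟨D, h, rfl⟩)

theorem sum_mem_rightOpts_sum_right (G : SGame) {X Y : SGame} (h : Y ∈ X.rightOpts) :
    G.sum Y ∈ (G.sum X).rightOpts :=
  mem_rightOpts_sum.2 (.inr ⟨Y, h, rfl⟩)

theorem leftScore_sum_of_leftOpts_eq_nil {G X : SGame} (hG : G.leftOpts = [])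
    (hX : X.leftOpts = []) : (G.sum X).leftScore = G.score + X.score := by
  rw [leftScore_of_leftOpts_eq_nil (leftOpts_sum_eq_nil.2 ⟨hG, hX⟩), score_sum]

theorem rightScore_sum_of_rightOpts_eq_nil {G X : SGame} (hG : G.rightOpts = [])
    (hX : X.rightOpts = []) : (G.sum X).rightScore = G.score + X.score := by
  rw [rightScore_of_rightOpts_eq_nil (rightOpts_sum_eq_nil.2 ⟨hG, hX⟩), score_sum]

theorem zero_sum_const (c : ℝ) : zero.sum (mk [] [] c) = mk [] [] c := by
  rw [zero, sum]; simp

theorem leftOpts_sum_const (X : SGame) (c : ℝ) :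
    (X.sum (mk [] [] c)).leftOpts = X.leftOpts.map (·.sum (mk [] [] c)) := by
  simp [leftOpts_sum]

theorem rightOpts_sum_const (X : SGame) (c : ℝ) :
    (X.sum (mk [] [] c)).rightOpts = X.rightOpts.map (·.sum (mk [] [] c)) := by
  simp [rightOpts_sum]

theorem score_sum_sum_const (c : ℝ) (P X : SGame) :
    (P.sum (X.sum (mk [] [] c))).score = (P.sum X).score + c := by
  simp only [score_sum, score_mk]; ring

theorem leftScore_sum_sum_const_of {c : ℝ} {P X : SGame}
    (hP : ∀ A ∈ P.leftOpts,
      (A.sum (X.sum (mk [] [] c))).rightScore = (A.sum X).rightScore + c)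
    (hX : ∀ Y ∈ X.leftOpts,
      (P.sum (Y.sum (mk [] [] c))).rightScore = (P.sum Y).rightScore + c) :
    (P.sum (X.sum (mk [] [] c))).leftScore = (P.sum X).leftScore + c := by
  apply le_antisymm
  · refine leftScore_le_iff.2 ⟨fun h => ?_, fun Q hQ => ?_⟩
    · rw [score_sum_sum_const, leftScore_of_leftOpts_eq_nil]
      simpa [leftOpts_sum_eq_nil, leftOpts_sum_const] using h
    · rcases mem_leftOpts_sum.1 hQ with ⟨A, hA, rfl⟩ | ⟨Y, hY, rfl⟩
      · rw [hP A hA]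
        linarith [le_leftScore_of_mem_leftOpts (sum_mem_leftOpts_sum_left X hA)]
      · obtain ⟨Z, hZ, rfl⟩ := List.mem_map.1 (leftOpts_sum_const X c ▸ hY)
        rw [hX Z hZ]
        linarith [le_leftScore_of_mem_leftOpts (sum_mem_leftOpts_sum_right P hZ)]
  · rw [← le_sub_iff_add_le]
    refine leftScore_le_iff.2 ⟨fun h => ?_, fun Q hQ => ?_⟩
    · rw [leftScore_of_leftOpts_eq_nil, score_sum_sum_const, add_sub_cancel_right]
      simpa [leftOpts_sum_eq_nil, leftOpts_sum_const] using h
    · rw [le_sub_iff_add_le]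
      rcases mem_leftOpts_sum.1 hQ with ⟨A, hA, rfl⟩ | ⟨Y, hY, rfl⟩
      · rw [← hP A hA]
        exact le_leftScore_of_mem_leftOpts (sum_mem_leftOpts_sum_left _ hA)
      · rw [← hX Y hY]
        exact le_leftScore_of_mem_leftOpts
          (sum_mem_leftOpts_sum_right P (leftOpts_sum_const X c ▸ List.mem_map_of_mem hY))

theorem rightScore_sum_sum_const_of {c : ℝ} {P X : SGame}
    (hP : ∀ D ∈ P.rightOpts,
      (D.sum (X.sum (mk [] [] c))).leftScore = (D.sum X).leftScore + c)
    (hX : ∀ Y ∈ X.rightOpts,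
      (P.sum (Y.sum (mk [] [] c))).leftScore = (P.sum Y).leftScore + c) :
    (P.sum (X.sum (mk [] [] c))).rightScore = (P.sum X).rightScore + c := by
  apply le_antisymm
  · rw [← sub_le_iff_le_add]
    refine le_rightScore_iff.2 ⟨fun h => ?_, fun Q hQ => ?_⟩
    · rw [rightScore_of_rightOpts_eq_nil, score_sum_sum_const, add_sub_cancel_right]
      simpa [rightOpts_sum_eq_nil, rightOpts_sum_const] using h
    · rw [sub_le_iff_le_add]
      rcases mem_rightOpts_sum.1 hQ with ⟨D, hD, rfl⟩ | ⟨Y, hY, rfl⟩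
      · rw [← hP D hD]
        exact rightScore_le_of_mem_rightOpts (sum_mem_rightOpts_sum_left _ hD)
      · rw [← hX Y hY]
        exact rightScore_le_of_mem_rightOpts
          (sum_mem_rightOpts_sum_right P (rightOpts_sum_const X c ▸ List.mem_map_of_mem hY))
  · refine le_rightScore_iff.2 ⟨fun h => ?_, fun Q hQ => ?_⟩
    · rw [score_sum_sum_const, rightScore_of_rightOpts_eq_nil]
      simpa [rightOpts_sum_eq_nil, rightOpts_sum_const] using h
    · rcases mem_rightOpts_sum.1 hQ with ⟨D, hD, rfl⟩ | ⟨Y, hY, rfl⟩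
      · rw [hP D hD]
        linarith [rightScore_le_of_mem_rightOpts (sum_mem_rightOpts_sum_left X hD)]
      · obtain ⟨Z, hZ, rfl⟩ := List.mem_map.1 (rightOpts_sum_const X c ▸ hY)
        rw [hX Z hZ]
        linarith [rightScore_le_of_mem_rightOpts (sum_mem_rightOpts_sum_right P hZ)]

theorem scores_sum_sum_const (c : ℝ) (P X : SGame) :
    (P.sum (X.sum (mk [] [] c))).leftScore = (P.sum X).leftScore + c ∧
      (P.sum (X.sum (mk [] [] c))).rightScore = (P.sum X).rightScore + c := by
  induction P using induction_on_options generalizing X with | _ P ihPL ihPR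
  induction X using induction_on_options with | _ X ihXL ihXR
  exact ⟨leftScore_sum_sum_const_of (fun A hA => (ihPL A hA X).2) (fun Y hY => (ihXL Y hY).2),
    rightScore_sum_sum_const_of (fun D hD => (ihPR D hD X).1) (fun Y hY => (ihXR Y hY).1)⟩

theorem leftScore_sum_sum_const (c : ℝ) (P X : SGame) :
    (P.sum (X.sum (mk [] [] c))).leftScore = (P.sum X).leftScore + c :=
  (scores_sum_sum_const c P X).1

theorem rightScore_sum_sum_const (c : ℝ) (P X : SGame) :
    (P.sum (X.sum (mk [] [] c))).rightScore = (P.sum X).rightScore + c :=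
  (scores_sum_sum_const c P X).2

theorem leftScore_sum_const (c : ℝ) (P : SGame) :
    (P.sum (mk [] [] c)).leftScore = (P.sum zero).leftScore + c := by
  rw [← leftScore_sum_sum_const, zero_sum_const]

theorem rightScore_sum_const (c : ℝ) (P : SGame) :
    (P.sum (mk [] [] c)).rightScore = (P.sum zero).rightScore + c := by
  rw [← rightScore_sum_sum_const, zero_sum_const]

/-! ### The order on games -/

instance : Preorder SGame where
  le G H := ∀ X, (G.sum X).leftScore ≤ (H.sum X).leftScore ∧
    (G.sum X).rightScore ≤ (H.sum X).rightScore
  le_refl _ _ := ⟨le_rfl, le_rfl⟩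
  le_trans _ _ _ h₁ h₂ X := ⟨(h₁ X).1.trans (h₂ X).1, (h₁ X).2.trans (h₂ X).2⟩

theorem le_def {G H : SGame} : G ≤ H ↔ ∀ X, (G.sum X).leftScore ≤ (H.sum X).leftScore ∧
    (G.sum X).rightScore ≤ (H.sum X).rightScore :=
  Iff.rfl

theorem le_iff_Le {G H : SGame} : G ≤ H ↔ Le G H := by
  refine ⟨fun h X => ⟨(h X).1.trans, (h X).2.trans, (h X).1.trans_lt, (h X).2.trans_lt⟩,
    fun h X => ⟨?_, ?_⟩⟩
  · have := (h (X.sum (mk [] [] (-(H.sum X).leftScore)))).1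
    simp only [leftScore_sum_sum_const] at this
    linarith [this (by linarith)]
  · have := (h (X.sum (mk [] [] (-(H.sum X).rightScore)))).2.1
    simp only [rightScore_sum_sum_const] at this
    linarith [this (by linarith)]

theorem le_iff_Ge {G H : SGame} : G ≤ H ↔ Ge H G := by
  refine ⟨fun h X => ⟨(h X).1.trans', (h X).2.trans', (h X).1.trans_lt', (h X).2.trans_lt'⟩,
    fun h X => ⟨?_, ?_⟩⟩
  · have := (h (X.sum (mk [] [] (-(G.sum X).leftScore)))).1
    simp only [leftScore_sum_sum_const] at this
    linarith [this (by linarith)]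
  · have := (h (X.sum (mk [] [] (-(G.sum X).rightScore)))).2.1
    simp only [rightScore_sum_sum_const] at this
    linarith [this (by linarith)]

theorem le_of_forall_options {G H : SGame}
    (hL : G.leftOpts = [] → H.leftOpts = [] ∧ G.score ≤ H.score)
    (hR : H.rightOpts = [] → G.rightOpts = [] ∧ G.score ≤ H.score)
    (hLopt : ∀ X, (∀ Y ∈ X.leftOpts, (G.sum Y).rightScore ≤ (H.sum Y).rightScore) →
      ∀ A ∈ G.leftOpts, (A.sum X).rightScore ≤ (H.sum X).leftScore)
    (hRopt : ∀ X, (∀ Y ∈ X.rightOpts, (G.sum Y).leftScore ≤ (H.sum Y).leftScore) →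
      ∀ D ∈ H.rightOpts, (G.sum X).rightScore ≤ (D.sum X).leftScore) :
    G ≤ H := by
  intro X
  induction X using induction_on_options with | _ X ihL ihR
  constructor
  · refine leftScore_le_iff.2 ⟨fun hGX => ?_, fun Q hQ => ?_⟩
    · obtain ⟨hG, hX⟩ := leftOpts_sum_eq_nil.1 hGX
      rw [leftScore_sum_of_leftOpts_eq_nil (hL hG).1 hX, score_sum]
      linarith [(hL hG).2]
    · rcases mem_leftOpts_sum.1 hQ with ⟨A, hA, rfl⟩ | ⟨Y, hY, rfl⟩
      · exact hLopt X (fun Y hY => (ihL Y hY).2) A hA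
      · exact (ihL Y hY).2.trans (le_leftScore_of_mem_leftOpts (sum_mem_leftOpts_sum_right H hY))
  · refine le_rightScore_iff.2 ⟨fun hHX => ?_, fun Q hQ => ?_⟩
    · obtain ⟨hH, hX⟩ := rightOpts_sum_eq_nil.1 hHX
      rw [rightScore_sum_of_rightOpts_eq_nil (hR hH).1 hX, score_sum]
      linarith [(hR hH).2]
    · rcases mem_rightOpts_sum.1 hQ with ⟨D, hD, rfl⟩ | ⟨Y, hY, rfl⟩
      · exact hRopt X (fun Y hY => (ihR Y hY).1) D hD
      · exact (rightScore_le_of_mem_rightOpts (sum_mem_rightOpts_sum_right G hY)).trans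
          (ihR Y hY).1

theorem mk_le_mk {L R L' R' : List SGame} {s : ℝ}
    (hL : ∀ A ∈ L, ∃ A' ∈ L', A ≤ A') (hR : ∀ D' ∈ R', ∃ D ∈ R, D ≤ D')
    (hLnil : L = [] → L' = []) (hRnil : R' = [] → R = []) :
    mk L R s ≤ mk L' R' s := by
  refine le_of_forall_options (fun h => ⟨hLnil h, le_rfl⟩) (fun h => ⟨hRnil h, le_rfl⟩)
    (fun X _ A hA => ?_) (fun X _ D' hD' => ?_)
  · obtain ⟨A', hA', hAA'⟩ := hL A hA
    exact ((hAA' X).2).trans (le_leftScore_of_mem_leftOpts (sum_mem_leftOpts_sum_left X hA'))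
  · obtain ⟨D, hD, hDD'⟩ := hR D' hD'
    exact (rightScore_le_of_mem_rightOpts (sum_mem_rightOpts_sum_left X hD)).trans (hDD' X).1

theorem exists_forall_leftScore_sum_const_lt (Gs : List SGame) (x : ℝ) :
    ∃ m, ∀ G ∈ Gs, (G.sum (mk [] [] m)).leftScore < x := by
  obtain ⟨b, hb⟩ := ((Gs.finite_toSet).image fun G => (G.sum zero).leftScore).bddAbove
  refine ⟨x - b - 1, fun G hG => ?_⟩
  rw [leftScore_sum_const]
  linarith [hb ⟨G, hG, rfl⟩]

theorem exists_forall_lt_rightScore_sum_const (Gs : List SGame) (x : ℝ) :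
    ∃ m, ∀ G ∈ Gs, x < (G.sum (mk [] [] m)).rightScore := by
  obtain ⟨b, hb⟩ := ((Gs.finite_toSet).image fun G => (G.sum zero).rightScore).bddBelow
  refine ⟨x - b + 1, fun G hG => ?_⟩
  rw [rightScore_sum_const]
  linarith [hb ⟨G, hG, rfl⟩]

theorem leftOpts_eq_nil_of_le {G H : SGame} (h : G ≤ H) (hG : G.leftOpts = []) :
    H.leftOpts = [] := by
  by_contra hH
  obtain ⟨m, hm⟩ := exists_forall_leftScore_sum_const_lt H.leftOpts 0
  let X := mk [] [mk [] [] m] (-G.score)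
  have hGX : (G.sum X).leftScore = 0 := by
    rw [leftScore_sum_of_leftOpts_eq_nil hG rfl]; simp [X]
  have hHX : (H.sum X).leftScore < 0 := by
    refine leftScore_lt_iff.2 ⟨fun h => absurd (leftOpts_sum_eq_nil.1 h).1 hH, fun Q hQ => ?_⟩
    rcases mem_leftOpts_sum.1 hQ with ⟨A, hA, rfl⟩ | ⟨Y, hY, rfl⟩
    · exact (rightScore_le_of_mem_rightOpts
        (sum_mem_rightOpts_sum_right A (List.mem_singleton_self _))).trans_lt (hm A hA)
    · simp [X] at hY
  linarith [(h X).1]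

theorem rightOpts_eq_nil_of_le {G H : SGame} (h : G ≤ H) (hH : H.rightOpts = []) :
    G.rightOpts = [] := by
  by_contra hG
  obtain ⟨m, hm⟩ := exists_forall_lt_rightScore_sum_const G.rightOpts 0
  let X := mk [mk [] [] m] [] (-H.score)
  have hHX : (H.sum X).rightScore = 0 := by
    rw [rightScore_sum_of_rightOpts_eq_nil hH rfl]; simp [X]
  have hGX : 0 < (G.sum X).rightScore := by
    refine lt_rightScore_iff.2 ⟨fun h => absurd (rightOpts_sum_eq_nil.1 h).1 hG, fun Q hQ => ?_⟩
    rcases mem_rightOpts_sum.1 hQ with ⟨D, hD, rfl⟩ | ⟨Y, hY, rfl⟩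
    · exact (hm D hD).trans_le (le_leftScore_of_mem_leftOpts
        (sum_mem_leftOpts_sum_right D (List.mem_singleton_self _)))
    · simp [X] at hY
  linarith [(h X).2]

theorem score_eq_of_antisymmRel {G H : SGame} (h : AntisymmRel (· ≤ ·) G H)
    (hG : G.leftOpts = [] ∨ G.rightOpts = []) : G.score = H.score := by
  rcases hG with hG | hG
  · have hH := leftOpts_eq_nil_of_le h.le hG
    have := le_antisymm (h.le zero).1 (h.ge zero).1
    rwa [leftScore_sum_of_leftOpts_eq_nil hG rfl, leftScore_sum_of_leftOpts_eq_nil hH rfl,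
      add_left_inj] at this
  · have hH := rightOpts_eq_nil_of_le h.ge hG
    have := le_antisymm (h.le zero).2 (h.ge zero).2
    rwa [rightScore_sum_of_rightOpts_eq_nil hG rfl, rightScore_sum_of_rightOpts_eq_nil hH rfl,
      add_left_inj] at this

/-! ### Reductions preserve equality -/

theorem mk_le_mk_replace_left {L₁ L₂ R : List SGame} {s : ℝ} {g g' : SGame} (h : g ≤ g') :
    mk (L₁ ++ g :: L₂) R s ≤ mk (L₁ ++ g' :: L₂) R s := by
  refine mk_le_mk (fun A hA => ?_) (fun D hD => ⟨D, hD, le_rfl⟩) (by simp) id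
  simp only [List.mem_append, List.mem_cons] at hA
  rcases hA with hA | rfl | hA
  · exact ⟨A, by simp [hA], le_rfl⟩
  · exact ⟨g', by simp, h⟩
  · exact ⟨A, by simp [hA], le_rfl⟩

theorem mk_le_mk_replace_right {L R₁ R₂ : List SGame} {s : ℝ} {g g' : SGame} (h : g ≤ g') :
    mk L (R₁ ++ g :: R₂) s ≤ mk L (R₁ ++ g' :: R₂) s := by
  refine mk_le_mk (fun A hA => ⟨A, hA, le_rfl⟩) (fun D hD => ?_) id (by simp)
  simp only [List.mem_append, List.mem_cons] at hD
  rcases hD with hD | rfl | hD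
  · exact ⟨D, by simp [hD], le_rfl⟩
  · exact ⟨g, by simp, h⟩
  · exact ⟨D, by simp [hD], le_rfl⟩

theorem antisymmRel_of_dominated_left {L₁ L₂ R : List SGame} {s : ℝ} {A B : SGame}
    (hA : A ∈ L₁ ++ L₂) (hBA : B ≤ A) :
    AntisymmRel (· ≤ ·) (mk (L₁ ++ B :: L₂) R s) (mk (L₁ ++ L₂) R s) := by
  refine ⟨mk_le_mk (fun A' hA' => ?_) (fun D hD => ⟨D, hD, le_rfl⟩) (by simp) id,
    mk_le_mk (fun A' hA' => ⟨A', ?_, le_rfl⟩) (fun D hD => ⟨D, hD, le_rfl⟩)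
      (fun h => by simp [h] at hA) id⟩
  · simp only [List.mem_append, List.mem_cons] at hA'
    rcases hA' with hA' | rfl | hA'
    · exact ⟨A', by simp [hA'], le_rfl⟩
    · exact ⟨A, hA, hBA⟩
    · exact ⟨A', by simp [hA'], le_rfl⟩
  · simp only [List.mem_append, List.mem_cons] at hA' ⊢
    tauto

theorem antisymmRel_of_dominated_right {L R₁ R₂ : List SGame} {s : ℝ} {D E : SGame}
    (hD : D ∈ R₁ ++ R₂) (hDE : D ≤ E) :
    AntisymmRel (· ≤ ·) (mk L (R₁ ++ E :: R₂) s) (mk L (R₁ ++ R₂) s) := by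
  refine ⟨mk_le_mk (fun A hA => ⟨A, hA, le_rfl⟩) (fun D' hD' => ⟨D', ?_, le_rfl⟩) id
      (fun h => by simp [h] at hD),
    mk_le_mk (fun A hA => ⟨A, hA, le_rfl⟩) (fun D' hD' => ?_) id (by simp)⟩
  · simp only [List.mem_append, List.mem_cons] at hD' ⊢
    tauto
  · simp only [List.mem_append, List.mem_cons] at hD'
    rcases hD' with hD' | rfl | hD'
    · exact ⟨D', by simp [hD'], le_rfl⟩
    · exact ⟨D, hD, hDE⟩
    · exact ⟨D', by simp [hD'], le_rfl⟩

theorem antisymmRel_of_reversible_left {L₁ L₂ R : List SGame} {s : ℝ} {A Ar : SGame}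
    (hAr : Ar ∈ A.rightOpts) (hrev : Ar ≤ mk (L₁ ++ A :: L₂) R s) :
    AntisymmRel (· ≤ ·) (mk (L₁ ++ A :: L₂) R s)
      (mk (L₁ ++ Ar.leftOpts ++ L₂) R s) := by
  set G := mk (L₁ ++ A :: L₂) R s
  set G' := mk (L₁ ++ Ar.leftOpts ++ L₂) R s
  have hne : Ar.leftOpts ≠ [] := fun h => by simpa [G] using leftOpts_eq_nil_of_le hrev h
  constructor
  · refine le_of_forall_options (fun h => by simp [G] at h) (fun h => ⟨h, le_rfl⟩)
      (fun X ih A' hA' => ?_)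
      (fun X _ D hD => rightScore_le_of_mem_rightOpts (sum_mem_rightOpts_sum_left X hD))
    simp only [G, leftOpts_mk, List.mem_append, List.mem_cons] at hA'
    rcases hA' with hA' | rfl | hA'
    · exact le_leftScore_of_mem_leftOpts (sum_mem_leftOpts_sum_left X (by simp [G', hA']))
    · refine (rightScore_le_of_mem_rightOpts (sum_mem_rightOpts_sum_left X hAr)).trans
        (leftScore_le_iff.2 ⟨fun h => absurd (leftOpts_sum_eq_nil.1 h).1 hne, fun Q hQ => ?_⟩)
      rcases mem_leftOpts_sum.1 hQ with ⟨Al, hAl, rfl⟩ | ⟨Y, hY, rfl⟩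
      · exact le_leftScore_of_mem_leftOpts (sum_mem_leftOpts_sum_left X (by simp [G', hAl]))
      · exact (hrev Y).2.trans ((ih Y hY).trans
          (le_leftScore_of_mem_leftOpts (sum_mem_leftOpts_sum_right G' hY)))
    · exact le_leftScore_of_mem_leftOpts (sum_mem_leftOpts_sum_left X (by simp [G', hA']))
  · refine le_of_forall_options (fun h => by simp [G', hne] at h) (fun h => ⟨h, le_rfl⟩)
      (fun X _ A' hA' => ?_)
      (fun X _ D hD => rightScore_le_of_mem_rightOpts (sum_mem_rightOpts_sum_left X hD))
    simp only [G', leftOpts_mk, List.mem_append] at hA'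
    rcases hA' with (hA' | hA') | hA'
    · exact le_leftScore_of_mem_leftOpts (sum_mem_leftOpts_sum_left X (by simp [G, hA']))
    · exact (le_leftScore_of_mem_leftOpts (sum_mem_leftOpts_sum_left X hA')).trans (hrev X).1
    · exact le_leftScore_of_mem_leftOpts (sum_mem_leftOpts_sum_left X (by simp [G, hA']))

theorem antisymmRel_of_reversible_right {L R₁ R₂ : List SGame} {s : ℝ} {D Dl : SGame}
    (hDl : Dl ∈ D.leftOpts) (hrev : mk L (R₁ ++ D :: R₂) s ≤ Dl) :
    AntisymmRel (· ≤ ·) (mk L (R₁ ++ D :: R₂) s)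
      (mk L (R₁ ++ Dl.rightOpts ++ R₂) s) := by
  set G := mk L (R₁ ++ D :: R₂) s
  set G' := mk L (R₁ ++ Dl.rightOpts ++ R₂) s
  have hne : Dl.rightOpts ≠ [] := fun h => by simpa [G] using rightOpts_eq_nil_of_le hrev h
  constructor
  · refine le_of_forall_options (fun h => ⟨h, le_rfl⟩) (fun h => by simp [G', hne] at h)
      (fun X _ A hA => le_leftScore_of_mem_leftOpts (sum_mem_leftOpts_sum_left X hA))
      (fun X _ D' hD' => ?_)
    simp only [G', rightOpts_mk, List.mem_append] at hD'
    rcases hD' with (hD' | hD') | hD'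
    · exact rightScore_le_of_mem_rightOpts (sum_mem_rightOpts_sum_left X (by simp [G, hD']))
    · exact (hrev X).2.trans (rightScore_le_of_mem_rightOpts (sum_mem_rightOpts_sum_left X hD'))
    · exact rightScore_le_of_mem_rightOpts (sum_mem_rightOpts_sum_left X (by simp [G, hD']))
  · refine le_of_forall_options (fun h => ⟨h, le_rfl⟩) (fun h => by simp [G] at h)
      (fun X _ A hA => le_leftScore_of_mem_leftOpts (sum_mem_leftOpts_sum_left X hA))
      (fun X ih D' hD' => ?_)
    simp only [G, rightOpts_mk, List.mem_append, List.mem_cons] at hD'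
    rcases hD' with hD' | rfl | hD'
    · exact rightScore_le_of_mem_rightOpts (sum_mem_rightOpts_sum_left X (by simp [G', hD']))
    · refine (le_rightScore_iff.2 ⟨fun h => absurd (rightOpts_sum_eq_nil.1 h).1 hne,
        fun Q hQ => ?_⟩).trans (le_leftScore_of_mem_leftOpts (sum_mem_leftOpts_sum_left X hDl))
      rcases mem_rightOpts_sum.1 hQ with ⟨Dr, hDr, rfl⟩ | ⟨Y, hY, rfl⟩
      · exact rightScore_le_of_mem_rightOpts (sum_mem_rightOpts_sum_left X (by simp [G', hDr]))
      · exact (rightScore_le_of_mem_rightOpts (sum_mem_rightOpts_sum_right G' hY)).trans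
          ((ih Y hY).trans (hrev Y).1)
    · exact rightScore_le_of_mem_rightOpts (sum_mem_rightOpts_sum_left X (by simp [G', hD']))

theorem Step.antisymmRel {G G' : SGame} (h : Step G G') : AntisymmRel (· ≤ ·) G G' := by
  induction h with
  | domL A hA h => exact antisymmRel_of_dominated_left hA (le_iff_Ge.2 h)
  | domR D hD h => exact antisymmRel_of_dominated_right hD (le_iff_Le.2 h)
  | revL hAr h => exact antisymmRel_of_reversible_left hAr (le_iff_Le.2 h)
  | revR hDl h => exact antisymmRel_of_reversible_right hDl (le_iff_Ge.2 h)
  | congL _ ih => exact ⟨mk_le_mk_replace_left ih.le, mk_le_mk_replace_left ih.ge⟩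
  | congR _ ih => exact ⟨mk_le_mk_replace_right ih.le, mk_le_mk_replace_right ih.ge⟩

theorem antisymmRel_of_reflTransGen_step {G H : SGame} (h : Relation.ReflTransGen Step G H) :
    AntisymmRel (· ≤ ·) G H := by
  induction h with
  | refl => exact .refl _ G
  | tail _ hstep ih => exact ih.trans hstep.antisymmRel

/-! ### Canonical forms -/

theorem exists_mem_leftOpts_leftScore_sum_le (H X : SGame) :
    ∃ X', X ∈ X'.leftOpts ∧ (H.sum X').leftScore ≤ (H.sum X).rightScore := by
  obtain ⟨m, hm⟩ := exists_forall_leftScore_sum_const_lt H.leftOpts (H.sum X).rightScore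
  refine ⟨mk [X] [mk [] [] m] 0, List.mem_singleton_self X,
    leftScore_le_iff.2 ⟨fun h => by simp [leftOpts_sum_eq_nil] at h, fun Q hQ => ?_⟩⟩
  rcases mem_leftOpts_sum.1 hQ with ⟨A, hA, rfl⟩ | ⟨Y, hY, rfl⟩
  · exact ((rightScore_le_of_mem_rightOpts
      (sum_mem_rightOpts_sum_right A (List.mem_singleton_self _))).trans_lt (hm A hA)).le
  · rw [List.mem_singleton.1 hY]

theorem exists_mem_rightOpts_le_rightScore_sum (G X : SGame) :
    ∃ X', X ∈ X'.rightOpts ∧ (G.sum X).leftScore ≤ (G.sum X').rightScore := by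
  obtain ⟨m, hm⟩ := exists_forall_lt_rightScore_sum_const G.rightOpts (G.sum X).leftScore
  refine ⟨mk [mk [] [] m] [X] 0, List.mem_singleton_self X,
    le_rightScore_iff.2 ⟨fun h => by simp [rightOpts_sum_eq_nil] at h, fun Q hQ => ?_⟩⟩
  rcases mem_rightOpts_sum.1 hQ with ⟨D, hD, rfl⟩ | ⟨Y, hY, rfl⟩
  · exact ((hm D hD).trans_le (le_leftScore_of_mem_leftOpts
      (sum_mem_leftOpts_sum_right D (List.mem_singleton_self _)))).le
  · rw [List.mem_singleton.1 hY]

theorem exists_leftScore_neg_pos_of_not_le {G H : SGame} (h : ¬ G ≤ H) :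
    ∃ X, (H.sum X).leftScore < 0 ∧ 0 < (G.sum X).leftScore := by
  obtain ⟨X, hX⟩ : ∃ X, (H.sum X).leftScore < (G.sum X).leftScore := by
    obtain ⟨X, hX⟩ := not_forall.1 (le_def.not.1 h)
    by_cases hl : (G.sum X).leftScore ≤ (H.sum X).leftScore
    · have hr := lt_of_not_ge fun hr => hX ⟨hl, hr⟩
      obtain ⟨X', hXX', hX'⟩ := exists_mem_leftOpts_leftScore_sum_le H X
      exact ⟨X', hX'.trans_lt (hr.trans_le
        (le_leftScore_of_mem_leftOpts (sum_mem_leftOpts_sum_right G hXX')))⟩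
    · exact ⟨X, lt_of_not_ge hl⟩
  refine ⟨X.sum (mk [] [] (-((H.sum X).leftScore + (G.sum X).leftScore) / 2)), ?_, ?_⟩ <;>
    rw [leftScore_sum_sum_const] <;> linarith

theorem exists_rightScore_neg_pos_of_not_le {G H : SGame} (h : ¬ G ≤ H) :
    ∃ X, (H.sum X).rightScore < 0 ∧ 0 < (G.sum X).rightScore := by
  obtain ⟨X, hX⟩ : ∃ X, (H.sum X).rightScore < (G.sum X).rightScore := by
    obtain ⟨X, hX⟩ := not_forall.1 (le_def.not.1 h)
    by_cases hl : (G.sum X).leftScore ≤ (H.sum X).leftScore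
    · exact ⟨X, lt_of_not_ge fun hr => hX ⟨hl, hr⟩⟩
    · obtain ⟨X', hXX', hX'⟩ := exists_mem_rightOpts_le_rightScore_sum G X
      exact ⟨X', (rightScore_le_of_mem_rightOpts (sum_mem_rightOpts_sum_right H hXX')).trans_lt
        ((lt_of_not_ge hl).trans_le hX')⟩
  refine ⟨X.sum (mk [] [] (-((H.sum X).rightScore + (G.sum X).rightScore) / 2)), ?_, ?_⟩ <;>
    rw [rightScore_sum_sum_const] <;> linarith

theorem exists_mem_leftOpts_le_of_le {G H A : SGame} (h : G ≤ H) (hA : A ∈ G.leftOpts)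
    (hrev : ∀ Ar ∈ A.rightOpts, ¬ Ar ≤ H) : ∃ A' ∈ H.leftOpts, A ≤ A' := by
  by_contra! hdom
  choose! T hT using fun A' hA' => exists_leftScore_neg_pos_of_not_le (hdom A' hA')
  choose! Y hY using fun Ar hAr => exists_rightScore_neg_pos_of_not_le (hrev Ar hAr)
  let X := mk (A.rightOpts.map Y)
    (mk [] [] (1 - (A.sum zero).leftScore) :: H.leftOpts.map T) (-1 - H.score)
  have hGX : 0 < (A.sum X).rightScore := by
    refine lt_rightScore_iff.2 ⟨fun h => by simp [X, rightOpts_sum_eq_nil] at h, fun Q hQ => ?_⟩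
    rcases mem_rightOpts_sum.1 hQ with ⟨Ar, hAr, rfl⟩ | ⟨Z, hZ, rfl⟩
    · exact (hY Ar hAr).2.trans_le (le_leftScore_of_mem_leftOpts
        (sum_mem_leftOpts_sum_right Ar (List.mem_map_of_mem hAr)))
    · simp only [X, rightOpts_mk, List.mem_cons, List.mem_map] at hZ
      rcases hZ with rfl | ⟨A', hA', rfl⟩
      · rw [leftScore_sum_const]; linarith
      · exact (hT A' hA').2
  have hHX : (H.sum X).leftScore < 0 := by
    refine leftScore_lt_iff.2 ⟨fun h => ?_, fun Q hQ => ?_⟩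
    · rw [score_sum]; simp [X]
    rcases mem_leftOpts_sum.1 hQ with ⟨A', hA', rfl⟩ | ⟨Z, hZ, rfl⟩
    · exact (rightScore_le_of_mem_rightOpts (sum_mem_rightOpts_sum_right A'
        (List.mem_cons_of_mem _ (List.mem_map_of_mem hA')))).trans_lt (hT A' hA').1
    · obtain ⟨Ar, hAr, rfl⟩ := List.mem_map.1 hZ
      exact (hY Ar hAr).1
  linarith [(h X).1, le_leftScore_of_mem_leftOpts (sum_mem_leftOpts_sum_left X hA)]

theorem exists_mem_rightOpts_le_of_le {G H D : SGame} (h : G ≤ H) (hD : D ∈ H.rightOpts)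
    (hrev : ∀ Dl ∈ D.leftOpts, ¬ G ≤ Dl) : ∃ D' ∈ G.rightOpts, D' ≤ D := by
  by_contra! hdom
  choose! T hT using fun D' hD' => exists_rightScore_neg_pos_of_not_le (hdom D' hD')
  choose! Y hY using fun Dl hDl => exists_leftScore_neg_pos_of_not_le (hrev Dl hDl)
  let X := mk (mk [] [] (-1 - (D.sum zero).rightScore) :: G.rightOpts.map T)
    (D.leftOpts.map Y) (1 - G.score)
  have hHX : (D.sum X).leftScore < 0 := by
    refine leftScore_lt_iff.2 ⟨fun h => by simp [X, leftOpts_sum_eq_nil] at h, fun Q hQ => ?_⟩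
    rcases mem_leftOpts_sum.1 hQ with ⟨Dl, hDl, rfl⟩ | ⟨Z, hZ, rfl⟩
    · exact (rightScore_le_of_mem_rightOpts
        (sum_mem_rightOpts_sum_right Dl (List.mem_map_of_mem hDl))).trans_lt (hY Dl hDl).1
    · simp only [X, leftOpts_mk, List.mem_cons, List.mem_map] at hZ
      rcases hZ with rfl | ⟨D', hD', rfl⟩
      · rw [rightScore_sum_const]; linarith
      · exact (hT D' hD').1
  have hGX : 0 < (G.sum X).rightScore := by
    refine lt_rightScore_iff.2 ⟨fun h => ?_, fun Q hQ => ?_⟩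
    · rw [score_sum]; simp [X]
    rcases mem_rightOpts_sum.1 hQ with ⟨D', hD', rfl⟩ | ⟨Z, hZ, rfl⟩
    · exact (hT D' hD').2.trans_le (le_leftScore_of_mem_leftOpts (sum_mem_leftOpts_sum_right D'
        (List.mem_cons_of_mem _ (List.mem_map_of_mem hD'))))
    · obtain ⟨Dl, hDl, rfl⟩ := List.mem_map.1 hZ
      exact (hY Dl hDl).2
  linarith [(h X).2, rightScore_le_of_mem_rightOpts (sum_mem_rightOpts_sum_left X hD)]

section Canonical

variable {G A B : SGame}

theorem Canonical.eq_of_le_left (hG : Canonical G) (hA : A ∈ G.leftOpts) (hB : B ∈ G.leftOpts)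
    (h : A ≤ B) : A = B := by
  obtain ⟨L, R, s⟩ := G
  rw [Canonical] at hG
  by_contra hne
  exact hG.1 B hB A hA (Ne.symm hne) (le_iff_Ge.1 h)

theorem Canonical.eq_of_le_right (hG : Canonical G) (hA : A ∈ G.rightOpts)
    (hB : B ∈ G.rightOpts) (h : A ≤ B) : A = B := by
  obtain ⟨L, R, s⟩ := G
  rw [Canonical] at hG
  by_contra hne
  exact hG.2.1 A hA B hB hne (le_iff_Le.1 h)

theorem Canonical.not_reversible_left (hG : Canonical G) (hA : A ∈ G.leftOpts)
    (hB : B ∈ A.rightOpts) : ¬ B ≤ G := by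
  obtain ⟨L, R, s⟩ := G
  rw [Canonical] at hG
  exact fun h => hG.2.2.1 A hA B hB (le_iff_Le.1 h)

theorem Canonical.not_reversible_right (hG : Canonical G) (hA : A ∈ G.rightOpts)
    (hB : B ∈ A.leftOpts) : ¬ G ≤ B := by
  obtain ⟨L, R, s⟩ := G
  rw [Canonical] at hG
  exact fun h => hG.2.2.2.1 A hA B hB (le_iff_Ge.1 h)

theorem Canonical.of_mem_leftOpts (hG : Canonical G) (hA : A ∈ G.leftOpts) : Canonical A := by
  obtain ⟨L, R, s⟩ := G
  rw [Canonical] at hG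
  exact hG.2.2.2.2.1 ⟨A, hA⟩ (List.mem_attach _ _)

theorem Canonical.of_mem_rightOpts (hG : Canonical G) (hA : A ∈ G.rightOpts) : Canonical A := by
  obtain ⟨L, R, s⟩ := G
  rw [Canonical] at hG
  exact hG.2.2.2.2.2 ⟨A, hA⟩ (List.mem_attach _ _)

end Canonical

theorem exists_mem_leftOpts_antisymmRel {G H A : SGame} (hG : Canonical G) (hH : Canonical H)
    (h : AntisymmRel (· ≤ ·) G H) (hA : A ∈ G.leftOpts) :
    ∃ A' ∈ H.leftOpts, AntisymmRel (· ≤ ·) A A' := by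
  obtain ⟨A', hA', hAA'⟩ := exists_mem_leftOpts_le_of_le h.le hA
    fun Ar hAr hArH => hG.not_reversible_left hA hAr (hArH.trans h.ge)
  obtain ⟨A'', hA'', hA'A''⟩ := exists_mem_leftOpts_le_of_le h.ge hA'
    fun Ar hAr hArG => hH.not_reversible_left hA' hAr (hArG.trans h.le)
  obtain rfl := hG.eq_of_le_left hA hA'' (hAA'.trans hA'A'')
  exact ⟨A', hA', hAA', hA'A''⟩

theorem exists_mem_rightOpts_antisymmRel {G H D : SGame} (hG : Canonical G) (hH : Canonical H)
    (h : AntisymmRel (· ≤ ·) G H) (hD : D ∈ H.rightOpts) :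
    ∃ D' ∈ G.rightOpts, AntisymmRel (· ≤ ·) D' D := by
  obtain ⟨D', hD', hD'D⟩ := exists_mem_rightOpts_le_of_le h.le hD
    fun Dl hDl hGDl => hH.not_reversible_right hD hDl (h.ge.trans hGDl)
  obtain ⟨D'', hD'', hD''D'⟩ := exists_mem_rightOpts_le_of_le h.ge hD'
    fun Dl hDl hHDl => hG.not_reversible_right hD' hDl (h.le.trans hHDl)
  obtain rfl := hH.eq_of_le_right hD'' hD (hD''D'.trans hD'D)
  exact ⟨D', hD', hD'D, hD''D'⟩

theorem Canonical.equiv_of_antisymmRel {G H : SGame} (hG : Canonical G) (hH : Canonical H)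
    (h : AntisymmRel (· ≤ ·) G H) : Equiv G H := by
  induction G using induction_on_options generalizing H with | _ G ihL ihR
  obtain ⟨L, R, s⟩ := G
  obtain ⟨L', R', s'⟩ := H
  rw [Equiv]
  refine ⟨score_eq_of_antisymmRel h, ?_, ?_, ?_, ?_⟩
  · rintro ⟨A, hA⟩ -
    obtain ⟨A', hA', hAA'⟩ := exists_mem_leftOpts_antisymmRel hG hH h hA
    exact ⟨⟨A', hA'⟩, List.mem_attach _ _,
      ihL A hA (hG.of_mem_leftOpts hA) (hH.of_mem_leftOpts hA') hAA'⟩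
  · rintro ⟨A', hA'⟩ -
    obtain ⟨A, hA, hA'A⟩ := exists_mem_leftOpts_antisymmRel hH hG h.symm hA'
    exact ⟨⟨A, hA⟩, List.mem_attach _ _,
      ihL A hA (hG.of_mem_leftOpts hA) (hH.of_mem_leftOpts hA') hA'A.symm⟩
  · rintro ⟨D, hD⟩ -
    obtain ⟨D', hD', hD'D⟩ := exists_mem_rightOpts_antisymmRel hH hG h.symm hD
    exact ⟨⟨D', hD'⟩, List.mem_attach _ _,
      ihR D hD (hG.of_mem_rightOpts hD) (hH.of_mem_rightOpts hD') hD'D.symm⟩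
  · rintro ⟨D', hD'⟩ -
    obtain ⟨D, hD, hDD'⟩ := exists_mem_rightOpts_antisymmRel hG hH h hD'
    exact ⟨⟨D, hD⟩, List.mem_attach _ _,
      ihR D hD (hG.of_mem_rightOpts hD) (hH.of_mem_rightOpts hD') hDD'⟩

end SGame

/-- Any two sequences of reductions of `G` terminating in canonical forms end
in equivalent games. -/
theorem reductions_confluent (G Gn Gm : SGame)
    (h1 : Relation.ReflTransGen SGame.Step G Gn)
    (h2 : Relation.ReflTransGen SGame.Step G Gm)
    (hGn : SGame.Canonical Gn) (hGm : SGame.Canonical Gm) :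
    SGame.Equiv Gn Gm :=
  hGn.equiv_of_antisymmRel hGm
    ((SGame.antisymmRel_of_reflTransGen_step h1).symm.trans
      (SGame.antisymmRel_of_reflTransGen_step h2))
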